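/- arXiv:2506.06848 — 2 statements merged into one kernel-verified Lean document; each statement's English description precedes it below -/
import Mathlib

section
/- Every equilibrium strategy is monotone: if σ* is an equilibrium strategy and σ*(s_i) > 0 for some s_i ∈ S, then σ*(s_j) = 1 for every s_j ∈ S with p_H(s_j)·p_L(s_i) > p_H(s_i)·p_L(s_j). -/
open Finset Filter Topology

noncomputable section

/-- Probability that a single buyer rejects the seller, given conditional signal
distribution `p` and strategy `σ`: `r_θ(σ) = 1 - Σ_s p_θ(s)·σ(s)`. -/
def rej {m : ℕ} (p σ : Fin m → ℝ) : ℝ := 1 - ∑ s, p s * σ s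

/-- `ν_θ(σ) = (1/n)·Σ_{k=0}^{n-1} r_θ(σ)^k`: probability of being visited. -/
def visit (n : ℕ) {m : ℕ} (p σ : Fin m → ℝ) : ℝ :=
  (1 / (n : ℝ)) * ∑ k ∈ Finset.range n, rej p σ ^ k

/-- Interim belief `Ψ(σ) = ρ·ν_H(σ) / (ρ·ν_H(σ) + (1-ρ)·ν_L(σ))`. -/
def interim (ρ : ℝ) (n : ℕ) {m : ℕ} (pL pH σ : Fin m → ℝ) : ℝ :=
  ρ * visit n pH σ / (ρ * visit n pH σ + (1 - ρ) * visit n pL σ)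

/-- Posterior belief `Q_ψ(s) = ψ·p_H(s) / (ψ·p_H(s) + (1-ψ)·p_L(s))`. -/
def post {m : ℕ} (ψ : ℝ) (pL pH : Fin m → ℝ) (s : Fin m) : ℝ :=
  ψ * pH s / (ψ * pH s + (1 - ψ) * pL s)

/-- A strategy maps each signal to an acceptance probability in `[0,1]`. -/
def IsStrategy {m : ℕ} (σ : Fin m → ℝ) : Prop := ∀ s, 0 ≤ σ s ∧ σ s ≤ 1

/-- `σ` is an equilibrium strategy: with `ψ* = Ψ(σ)`, accept for sure when the
posterior exceeds `c`, reject for sure when it falls below `c`. -/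
def IsEquilibrium (ρ c : ℝ) (n : ℕ) {m : ℕ} (pL pH σ : Fin m → ℝ) : Prop :=
  IsStrategy σ ∧
  ∀ s : Fin m,
    (c < post (interim ρ n pL pH σ) pL pH s → σ s = 1) ∧
    (post (interim ρ n pL pH σ) pL pH s < c → σ s = 0)

/-- Total surplus `Π(σ) = (1-c)·ρ·(1-r_H(σ)^n) - c·(1-ρ)·(1-r_L(σ)^n)`. -/
def surplus (ρ c : ℝ) (n : ℕ) {m : ℕ} (pL pH σ : Fin m → ℝ) : ℝ :=
  (1 - c) * ρ * (1 - rej pH σ ^ n) - c * (1 - ρ) * (1 - rej pL σ ^ n)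

/-- The most selective equilibrium strategy. -/
def MostSelective (ρ c : ℝ) (n : ℕ) {m : ℕ} (pL pH σ : Fin m → ℝ) : Prop :=
  IsEquilibrium ρ c n pL pH σ ∧
  ∀ σ' : Fin m → ℝ, IsEquilibrium ρ c n pL pH σ' → ∀ s, σ s ≤ σ' s

/-- The least selective equilibrium strategy. -/
def LeastSelective (ρ c : ℝ) (n : ℕ) {m : ℕ} (pL pH σ : Fin m → ℝ) : Prop :=
  IsEquilibrium ρ c n pL pH σ ∧
  ∀ σ' : Fin m → ℝ, IsEquilibrium ρ c n pL pH σ' → ∀ s, σ' s ≤ σ s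

/-- An experiment: `p_L, p_H` are probability mass functions with full joint support,
indexed so that likelihood ratios are nondecreasing. -/
def IsExperiment {m : ℕ} (pL pH : Fin m → ℝ) : Prop :=
  (∀ s, 0 ≤ pL s) ∧ (∀ s, 0 ≤ pH s) ∧
  (∑ s, pL s = 1) ∧ (∑ s, pH s = 1) ∧
  (∀ s, 0 < pL s + pH s) ∧
  (∀ i j : Fin m, i ≤ j → pH i * pL j ≤ pH j * pL i)

/-- A strategy is monotone: a positive acceptance probability at `s_i` forces sure
acceptance at every signal with strictly higher likelihood ratio. -/
def MonotoneStrategy {m : ℕ} (pL pH σ : Fin m → ℝ) : Prop :=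
  ∀ i j : Fin m, 0 < σ i → pH i * pL j < pH j * pL i → σ j = 1

lemma visit_pos {m : ℕ} (n : ℕ) (hn : 1 ≤ n) (p σ : Fin m → ℝ)
    (hp : ∀ s, 0 ≤ p s) (hp1 : ∑ s, p s = 1) (hσ : IsStrategy σ) :
    0 < visit n p σ := by
  have hr : 0 ≤ rej p σ := by
    have h : ∑ s, p s * σ s ≤ ∑ s, p s := by
      apply Finset.sum_le_sum
      intro s _
      calc p s * σ s ≤ p s * 1 := mul_le_mul_of_nonneg_left (hσ s).2 (hp s)
        _ = p s := mul_one _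
    simp only [rej, sub_nonneg]
    exact hp1 ▸ h
  have hsum : 0 < ∑ k ∈ Finset.range n, rej p σ ^ k := by
    apply Finset.sum_pos' (fun k _ => pow_nonneg hr k)
    exact ⟨0, Finset.mem_range.2 hn, by simp⟩
  have hn' : (0:ℝ) < 1 / n := by positivity
  exact mul_pos hn' hsum

/-- every equilibrium strategy is monotone. -/
theorem equilibrium_monotone
    (ρ c : ℝ) (hρ : ρ ∈ Set.Ioo (0:ℝ) 1) (hc : c ∈ Set.Ioo (0:ℝ) 1)
    (n : ℕ) (hn : 1 ≤ n) (m : ℕ) (hm : 1 ≤ m)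
    (pL pH : Fin m → ℝ) (hE : IsExperiment pL pH)
    (σ : Fin m → ℝ) (hσ : IsEquilibrium ρ c n pL pH σ) :
    MonotoneStrategy pL pH σ := by
  obtain ⟨hL0, hH0, hL1, hH1, hpos, _⟩ := hE
  obtain ⟨hstr, heq⟩ := hσ
  intro i j hi hij
  set ψ := interim ρ n pL pH σ with hψdef
  have hνH := visit_pos n hn pH σ hH0 hH1 hstr
  have hνL := visit_pos n hn pL σ hL0 hL1 hstr
  have hnum : 0 < ρ * visit n pH σ := mul_pos hρ.1 hνH
  have hnum2 : 0 < (1 - ρ) * visit n pL σ := mul_pos (by linarith [hρ.2]) hνL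
  have hden : 0 < ρ * visit n pH σ + (1 - ρ) * visit n pL σ := by linarith
  have hψ0 : 0 < ψ := div_pos hnum hden
  have hψ1 : ψ < 1 := by
    rw [hψdef, interim, div_lt_one hden]
    linarith
  -- denominators of posteriors positive
  have hd : ∀ s : Fin m, 0 < ψ * pH s + (1 - ψ) * pL s := by
    intro s
    rcases lt_or_ge 0 (pH s) with h | h
    · have : 0 ≤ (1 - ψ) * pL s := mul_nonneg (by linarith) (hL0 s)
      nlinarith
    · have hH : pH s = 0 := le_antisymm h (hH0 s)
      have : 0 < pL s := by have := hpos s; linarith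
      nlinarith
  have hQij : post ψ pL pH i < post ψ pL pH j := by
    rw [post, post, div_lt_div_iff₀ (hd i) (hd j)]
    nlinarith [mul_pos hψ0 (sub_pos.2 hψ1)]
  have hQi : c ≤ post ψ pL pH i := by
    by_contra h
    push_neg at h
    have := (heq i).2 h
    rw [this] at hi
    exact lt_irrefl 0 hi
  exact (heq j).1 (lt_of_le_of_lt hQi hQij)
end
end

section
/- Stronger good news raises surplus: let E = ({l,h}, p_L, p_H) and E' = ({l',h'}, p'_L, p'_H) be binary experiments such that the bad-news likelihood ratios coincide, p'_H(l')·p_L(l) = p_H(l)·p'_L(l), and E' delivers weakly stronger good news, p'_H(h')·p_L(h) ≥ p_H(h)·p'_L(h). Then total surplus in the most selective equilibrium under E' weakly exceeds that under E (Π'(σ̂') ≥ Π(σ̂) for most selective equilibrium strategies σ̂' of E' and σ̂ of E), and likewise total surplus in the least selective equilibrium under E' weakly exceeds that under E. -/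
open Finset Filter Topology

noncomputable section

/-!
Write a binary experiment as `pL = (u, 1 - u)`, `pH = (ℓ * u, 1 - ℓ * u)`. Equal bad news means a
common `ℓ`. If `ℓ = 1` both experiments are uninformative and all their equilibria yield the same
surplus; if `ℓ < 1`, stronger good news means `u ≤ u'`.

Total surplus is `∑ s, σ s * gain s`, where `gain s` has the sign of `Q(s) - c`, so equilibrium
surplus is nonnegative, and it vanishes unless the high signal is accepted for sure. On strategies
`(a, 1)` the low-signal gain (divided by `u`) and the surplus depend on `u` and `a` only through
the probability `v = u * (1 - a)` that type `L` is rejected, and the surplus is increasing in `v`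
once that gain is nonpositive somewhere. Raising `u` to `u'` only enlarges the range `[0, u]` of
`v`, and by the intermediate value theorem the selected equilibrium moves to a larger `v`. The
most selective equilibrium of `E'` still accepts the high signal for sure: if an equilibrium
`(0, x')` of `E'` had `x' < 1`, the strategy `(0, x)` of `E` that rejects type `L` equally often
would have a nonpositive high-signal gain, giving an equilibrium `(0, y)` of `E` with `y ≤ x < 1`.
-/

section General

variable {m : ℕ} {A B : ℝ} {n : ℕ} {pL pH σ : Fin m → ℝ}

/-- With `A = (1 - c) * ρ` and `B = c * (1 - ρ)`, `gain` has the sign of `Q_{Ψ(σ)}(s) - c`. -/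
def gain (A B : ℝ) (n : ℕ) (pL pH σ : Fin m → ℝ) (s : Fin m) : ℝ :=
  A * pH s * ∑ k ∈ range n, rej pH σ ^ k - B * pL s * ∑ k ∈ range n, rej pL σ ^ k

def IsGainEquilibrium (A B : ℝ) (n : ℕ) (pL pH σ : Fin m → ℝ) : Prop :=
  IsStrategy σ ∧
    ∀ s, (0 < gain A B n pL pH σ s → σ s = 1) ∧ (gain A B n pL pH σ s < 0 → σ s = 0)

def welfare (A B : ℝ) (n : ℕ) (pL pH σ : Fin m → ℝ) : ℝ :=
  A * (1 - rej pH σ ^ n) - B * (1 - rej pL σ ^ n)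

lemma rej_nonneg {p : Fin m → ℝ} (hp : ∀ s, 0 ≤ p s) (hp1 : ∑ s, p s = 1) (hσ : IsStrategy σ) :
    0 ≤ rej p σ := by
  have : ∑ s, p s * σ s ≤ ∑ s, p s :=
    sum_le_sum fun s _ => mul_le_of_le_one_right (hp s) (hσ s).2
  unfold rej; linarith

lemma rej_le_one {p : Fin m → ℝ} (hp : ∀ s, 0 ≤ p s) (hσ : IsStrategy σ) : rej p σ ≤ 1 := by
  have : 0 ≤ ∑ s, p s * σ s := sum_nonneg fun s _ => mul_nonneg (hp s) (hσ s).1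
  unfold rej; linarith

lemma lt_div_add_iff {x y c : ℝ} (h : 0 < x + y) : c < x / (x + y) ↔ c * y < (1 - c) * x := by
  rw [lt_div_iff₀ h]; constructor <;> intro <;> linarith

lemma div_add_lt_iff {x y c : ℝ} (h : 0 < x + y) : x / (x + y) < c ↔ (1 - c) * x < c * y := by
  rw [div_lt_iff₀ h]; constructor <;> intro <;> linarith

lemma post_interim_eq {ρ : ℝ} (s : Fin m) (h : 0 < ρ * visit n pH σ + (1 - ρ) * visit n pL σ) :
    post (interim ρ n pL pH σ) pL pH s =
      ρ * visit n pH σ * pH s / (ρ * visit n pH σ * pH s + (1 - ρ) * visit n pL σ * pL s) := by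
  unfold post interim
  field_simp
  ring_nf

lemma exists_post_interim_eq_div {ρ c : ℝ} (hρ : ρ ∈ Set.Ioo (0:ℝ) 1) (hn : n ≠ 0)
    (hE : IsExperiment pL pH) (hσ : IsStrategy σ) (s : Fin m) :
    ∃ N M : ℝ, 0 < N + M ∧ post (interim ρ n pL pH σ) pL pH s = N / (N + M) ∧
      (1 - c) * N - c * M = gain ((1 - c) * ρ) (c * (1 - ρ)) n pL pH σ s / n := by
  obtain ⟨hL, hH, hL1, hH1, hsupp, -⟩ := hE
  have hvisit : ∀ p, (∀ s, 0 ≤ p s) → ∑ s, p s = 1 → 0 < visit n p σ := fun p hp hp1 =>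
    mul_pos (by positivity) (geom_sum_pos (rej_nonneg hp hp1 hσ) hn)
  have hN : 0 < ρ * visit n pH σ := mul_pos hρ.1 (hvisit pH hH hH1)
  have hM : 0 < (1 - ρ) * visit n pL σ := mul_pos (sub_pos.2 hρ.2) (hvisit pL hL hL1)
  refine ⟨ρ * visit n pH σ * pH s, (1 - ρ) * visit n pL σ * pL s, ?_,
    post_interim_eq s (by linarith), by unfold visit gain; field_simp⟩
  have := hsupp s
  rcases le_total (ρ * visit n pH σ) ((1 - ρ) * visit n pL σ) with h | h
  · nlinarith [mul_le_mul_of_nonneg_right h (hL s)]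
  · nlinarith [mul_le_mul_of_nonneg_right h (hH s)]

lemma lt_post_interim_iff {ρ c : ℝ} (hρ : ρ ∈ Set.Ioo (0:ℝ) 1) (hn : n ≠ 0)
    (hE : IsExperiment pL pH) (hσ : IsStrategy σ) (s : Fin m) :
    c < post (interim ρ n pL pH σ) pL pH s ↔ 0 < gain ((1 - c) * ρ) (c * (1 - ρ)) n pL pH σ s := by
  obtain ⟨N, M, hNM, hpost, hgain⟩ := exists_post_interim_eq_div (c := c) hρ hn hE hσ s
  rw [hpost, lt_div_add_iff hNM, ← sub_pos, hgain, div_pos_iff_of_pos_right (by positivity)]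

lemma post_interim_lt_iff {ρ c : ℝ} (hρ : ρ ∈ Set.Ioo (0:ℝ) 1) (hn : n ≠ 0)
    (hE : IsExperiment pL pH) (hσ : IsStrategy σ) (s : Fin m) :
    post (interim ρ n pL pH σ) pL pH s < c ↔ gain ((1 - c) * ρ) (c * (1 - ρ)) n pL pH σ s < 0 := by
  obtain ⟨N, M, hNM, hpost, hgain⟩ := exists_post_interim_eq_div (c := c) hρ hn hE hσ s
  rw [hpost, div_add_lt_iff hNM, ← sub_neg, hgain, div_lt_iff₀ (by positivity), zero_mul]

lemma isEquilibrium_iff {ρ c : ℝ} (hρ : ρ ∈ Set.Ioo (0:ℝ) 1) (hn : n ≠ 0)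
    (hE : IsExperiment pL pH) (σ : Fin m → ℝ) :
    IsEquilibrium ρ c n pL pH σ ↔ IsGainEquilibrium ((1 - c) * ρ) (c * (1 - ρ)) n pL pH σ := by
  refine and_congr_right fun hσ => forall_congr' fun s => ?_
  rw [lt_post_interim_iff hρ hn hE hσ, post_interim_lt_iff hρ hn hE hσ]

lemma welfare_eq_sum_mul_gain : welfare A B n pL pH σ = ∑ s, σ s * gain A B n pL pH σ s := by
  have key : ∀ p : Fin m → ℝ,
      1 - rej p σ ^ n = (∑ k ∈ range n, rej p σ ^ k) * ∑ s, p s * σ s := fun p => by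
    rw [← geom_sum_mul_neg]; congr 1; unfold rej; ring
  have distrib : ∀ (C G : ℝ) (p : Fin m → ℝ),
      C * (G * ∑ s, p s * σ s) = ∑ s, σ s * (C * p s * G) := fun C G p => by
    rw [mul_sum, mul_sum]; exact sum_congr rfl fun s _ => by ring
  simp only [welfare, gain, key, distrib, mul_sub, ← sum_sub_distrib]

lemma welfare_nonneg (h : IsGainEquilibrium A B n pL pH σ) : 0 ≤ welfare A B n pL pH σ := by
  rw [welfare_eq_sum_mul_gain]
  refine sum_nonneg fun s _ => ?_
  rcases lt_trichotomy (gain A B n pL pH σ s) 0 with hg | hg | hg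
  · simp [(h.2 s).2 hg]
  · simp [hg]
  · exact mul_nonneg (h.1 s).1 hg.le

lemma gain_pos_of_nonneg_of_lr_lt (hA : 0 < A) (hn : n ≠ 0) (hr : 0 ≤ rej pH σ) {s t : Fin m}
    (hs : 0 < pL s) (ht : 0 ≤ pL t) (hst : pH s * pL t < pH t * pL s)
    (h : 0 ≤ gain A B n pL pH σ s) : 0 < gain A B n pL pH σ t := by
  have hG := geom_sum_pos hr hn
  have key : pL s * gain A B n pL pH σ t = pL t * gain A B n pL pH σ s +
      A * (∑ k ∈ range n, rej pH σ ^ k) * (pH t * pL s - pH s * pL t) := by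
    unfold gain; ring
  have : 0 < pL s * gain A B n pL pH σ t := by
    rw [key]
    nlinarith [mul_nonneg ht h, mul_pos (mul_pos hA hG) (sub_pos.2 hst)]
  exact pos_of_mul_pos_right this hs.le

lemma welfare_eq_max_of_uninformative {p : Fin m → ℝ} (hp : ∀ s, 0 ≤ p s) (hp1 : ∑ s, p s = 1)
    (hn : n ≠ 0) (h : IsGainEquilibrium A B n p p σ) : welfare A B n p p σ = max (A - B) 0 := by
  have hr0 := rej_nonneg hp hp1 h.1
  have hw : welfare A B n p p σ = (A - B) * (1 - rej p σ ^ n) := by unfold welfare; ring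
  rcases le_or_gt A B with hAB | hAB
  · rw [max_eq_right (by linarith)]
    refine le_antisymm ?_ (welfare_nonneg h)
    rw [hw]
    exact mul_nonpos_of_nonpos_of_nonneg (by linarith)
      (sub_nonneg.2 (pow_le_one₀ hr0 (rej_le_one hp h.1)))
  · have hσ : ∀ s, p s * σ s = p s := fun s => by
      rcases (hp s).eq_or_lt with hs | hs
      · rw [← hs, zero_mul]
      · have : gain A B n p p σ s = (A - B) * p s * ∑ k ∈ range n, rej p σ ^ k := by
          unfold gain; ring
        have hg : 0 < gain A B n p p σ s := by
          rw [this]; have := geom_sum_pos hr0 hn; positivity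
        rw [(h.2 s).1 hg, mul_one]
    have : rej p σ = 0 := by simp only [rej, hσ, hp1, sub_self]
    rw [hw, this, zero_pow hn, max_eq_left (sub_nonneg.2 hAB.le)]; ring

end General

def binDist (w : ℝ) : Fin 2 → ℝ := ![w, 1 - w]

@[simp] lemma binDist_zero (w : ℝ) : binDist w 0 = w := rfl

@[simp] lemma binDist_one (w : ℝ) : binDist w 1 = 1 - w := rfl

lemma binDist_nonneg {w : ℝ} (hw : w ∈ Set.Icc (0:ℝ) 1) (s : Fin 2) : 0 ≤ binDist w s := by
  fin_cases s <;> simp [hw.1, hw.2]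

lemma sum_binDist (w : ℝ) : ∑ s, binDist w s = 1 := by simp [Fin.sum_univ_two]

lemma rej_binDist (w : ℝ) (σ : Fin 2 → ℝ) :
    rej (binDist w) σ = 1 - (w * σ 0 + (1 - w) * σ 1) := by
  simp [rej, Fin.sum_univ_two]

lemma rej_binDist_nonneg {w : ℝ} (hw : w ∈ Set.Icc (0:ℝ) 1) {σ : Fin 2 → ℝ} (hσ : IsStrategy σ) :
    0 ≤ rej (binDist w) σ :=
  rej_nonneg (binDist_nonneg hw) (sum_binDist w) hσ

lemma rej_binDist_accept_high (w a : ℝ) : rej (binDist w) ![a, 1] = w * (1 - a) := by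
  rw [rej_binDist]; simp; ring

lemma exists_binDist_of_isExperiment {pL pH : Fin 2 → ℝ} (hE : IsExperiment pL pH) :
    ∃ u ℓ : ℝ, u ∈ Set.Ioc (0:ℝ) 1 ∧ ℓ ∈ Set.Icc (0:ℝ) 1 ∧
      pL = binDist u ∧ pH = binDist (ℓ * u) := by
  obtain ⟨hL, hH, hL1, hH1, hsupp, hmlr⟩ := hE
  rw [Fin.sum_univ_two] at hL1 hH1
  have hmlr := hmlr 0 1 (by decide)
  rw [show pL 1 = 1 - pL 0 by linarith, show pH 1 = 1 - pH 0 by linarith] at hmlr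
  have hHL : pH 0 ≤ pL 0 := by nlinarith
  have hu : 0 < pL 0 := by
    by_contra! h
    nlinarith [hsupp 0, hL 0, hL 1, hH 0, hH 1]
  refine ⟨pL 0, pH 0 / pL 0, ⟨hu, by linarith [hL 1]⟩,
    ⟨div_nonneg (hH 0) hu.le, (div_le_one hu).2 hHL⟩, ?_, ?_⟩ <;>
    ext i <;> fin_cases i <;> simp [binDist, hu.ne'] <;> linarith

lemma isStrategy_vec {a b : ℝ} (ha : a ∈ Set.Icc (0:ℝ) 1) (hb : b ∈ Set.Icc (0:ℝ) 1) :
    IsStrategy ![a, b] :=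
  Fin.forall_fin_two.2 ⟨by simpa using ha, by simpa using hb⟩

lemma eq_vec_of_apply_one_eq_one {σ : Fin 2 → ℝ} (h : σ 1 = 1) : σ = ![σ 0, 1] := by
  ext i; fin_cases i <;> simp [h]

lemma eq_vec_of_apply_zero_eq_zero {σ : Fin 2 → ℝ} (h : σ 0 = 0) : σ = ![0, σ 1] := by
  ext i; fin_cases i <;> simp [h]

section RejectionOfL

variable {A B : ℝ} {n : ℕ} {ℓ v w : ℝ}

/-- Gain at the low signal, divided by its probability under `L`, of a strategy that accepts
the high signal for sure and under which type `L` is rejected with probability `v`; type `H`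
is then rejected with probability `ℓ * v`. -/
def lowGainOfRej (A B : ℝ) (n : ℕ) (ℓ v : ℝ) : ℝ :=
  A * ℓ * ∑ k ∈ range n, (ℓ * v) ^ k - B * ∑ k ∈ range n, v ^ k

def welfareOfRej (A B : ℝ) (n : ℕ) (ℓ v : ℝ) : ℝ := A * (1 - (ℓ * v) ^ n) - B * (1 - v ^ n)

lemma welfareOfRej_mono (hAB : A * ℓ ^ n ≤ B) (hv : 0 ≤ v) (hvw : v ≤ w) :
    welfareOfRej A B n ℓ v ≤ welfareOfRej A B n ℓ w := by
  have := pow_le_pow_left₀ hv hvw n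
  unfold welfareOfRej; rw [mul_pow, mul_pow]; nlinarith

lemma pow_le_of_lowGainOfRej_nonpos (hA : 0 < A) (hn : n ≠ 0) (hℓ : ℓ ∈ Set.Icc (0:ℝ) 1)
    (hv : 0 ≤ v) (h : lowGainOfRej A B n ℓ v ≤ 0) : A * ℓ ^ n ≤ B := by
  have hG := geom_sum_pos hv hn
  have hsum : ℓ ^ (n - 1) * ∑ k ∈ range n, v ^ k ≤ ∑ k ∈ range n, (ℓ * v) ^ k := by
    rw [mul_sum]
    refine sum_le_sum fun k hk => ?_
    rw [mul_pow]
    exact mul_le_mul_of_nonneg_right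
      (pow_le_pow_of_le_one hℓ.1 hℓ.2 (by simp at hk; omega)) (pow_nonneg hv k)
  have hpow : ℓ ^ n = ℓ * ℓ ^ (n - 1) := by rw [← pow_succ', Nat.sub_add_cancel (by omega)]
  have : A * ℓ ^ n * ∑ k ∈ range n, v ^ k ≤ B * ∑ k ∈ range n, v ^ k := by
    unfold lowGainOfRej at h
    rw [hpow]
    nlinarith [mul_le_mul_of_nonneg_left hsum (mul_nonneg hA.le hℓ.1)]
  exact le_of_mul_le_mul_right this hG

lemma lowGainOfRej_neg (hA : 0 < A) (hn : n ≠ 0) (hℓ : ℓ ∈ Set.Icc (0:ℝ) 1) (hAB : A * ℓ < B)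
    (hv : 0 ≤ v) : lowGainOfRej A B n ℓ v < 0 := by
  have hG := geom_sum_pos hv hn
  have : ∑ k ∈ range n, (ℓ * v) ^ k ≤ ∑ k ∈ range n, v ^ k :=
    sum_le_sum fun k _ => pow_le_pow_left₀ (mul_nonneg hℓ.1 hv)
      (mul_le_of_le_one_left hv hℓ.2) k
  unfold lowGainOfRej
  nlinarith [mul_le_mul_of_nonneg_left this (mul_nonneg hA.le hℓ.1)]

lemma continuous_lowGainOfRej : Continuous (lowGainOfRej A B n ℓ) := by
  unfold lowGainOfRej; fun_prop

end RejectionOfL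

section Binary

variable {A B : ℝ} {n : ℕ} {u u' ℓ : ℝ}

lemma gain_zero_accept_high (a : ℝ) :
    gain A B n (binDist u) (binDist (ℓ * u)) ![a, 1] 0 =
      u * lowGainOfRej A B n ℓ (u * (1 - a)) := by
  simp only [gain, rej_binDist_accept_high, binDist_zero, lowGainOfRej, mul_assoc]; ring

lemma welfare_accept_high (a : ℝ) :
    welfare A B n (binDist u) (binDist (ℓ * u)) ![a, 1] = welfareOfRej A B n ℓ (u * (1 - a)) := by
  simp only [welfare, rej_binDist_accept_high, welfareOfRej, mul_assoc]

lemma welfare_reject_low (x : ℝ) :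
    welfare A B n (binDist u) (binDist (ℓ * u)) ![0, x] =
      x * gain A B n (binDist u) (binDist (ℓ * u)) ![0, x] 1 := by
  simp [welfare_eq_sum_mul_gain, Fin.sum_univ_two]

lemma gain_one_zero_one :
    gain A B n (binDist u) (binDist (ℓ * u)) ![0, 1] 1 = welfareOfRej A B n ℓ u := by
  simpa using (welfare_reject_low (A := A) (B := B) (n := n) (u := u) (ℓ := ℓ) 1).symm.trans
    (welfare_accept_high 0)

lemma gain_one_zero_zero :
    gain A B n (binDist u) (binDist (ℓ * u)) ![0, 0] 1 = n * (A * (1 - ℓ * u) - B * (1 - u)) := by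
  simp [gain, rej_binDist]; ring

lemma continuous_gain_one_reject_low :
    Continuous fun x => gain A B n (binDist u) (binDist (ℓ * u)) ![0, x] 1 := by
  simp only [gain, rej_binDist, Matrix.cons_val_zero, Matrix.cons_val_one]; fun_prop

lemma gain_one_pos_of_gain_zero_nonneg (hA : 0 < A) (hn : n ≠ 0) (hu : u ∈ Set.Ioc (0:ℝ) 1)
    (hℓ : ℓ ∈ Set.Ico (0:ℝ) 1) {σ : Fin 2 → ℝ} (hσ : IsStrategy σ)
    (h : 0 ≤ gain A B n (binDist u) (binDist (ℓ * u)) σ 0) :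
    0 < gain A B n (binDist u) (binDist (ℓ * u)) σ 1 := by
  obtain ⟨hu0, hu1⟩ := hu
  obtain ⟨hℓ0, hℓ1⟩ := hℓ
  refine gain_pos_of_nonneg_of_lr_lt (s := 0) hA hn
    (rej_binDist_nonneg ⟨by positivity, by nlinarith⟩ hσ) hu0 (by simp [hu1]) ?_ h
  simp only [binDist_zero, binDist_one]; nlinarith

lemma apply_one_eq_one_of_apply_zero_pos (hA : 0 < A) (hn : n ≠ 0) (hu : u ∈ Set.Ioc (0:ℝ) 1)
    (hℓ : ℓ ∈ Set.Ico (0:ℝ) 1) {σ : Fin 2 → ℝ}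
    (h : IsGainEquilibrium A B n (binDist u) (binDist (ℓ * u)) σ) (h0 : 0 < σ 0) : σ 1 = 1 := by
  refine (h.2 1).1 (gain_one_pos_of_gain_zero_nonneg hA hn hu hℓ h.1 ?_)
  by_contra! hg
  exact h0.ne' ((h.2 0).2 hg)

lemma welfare_nonpos_of_apply_one_lt_one (hA : 0 < A) (hn : n ≠ 0) (hu : u ∈ Set.Ioc (0:ℝ) 1)
    (hℓ : ℓ ∈ Set.Ico (0:ℝ) 1) {σ : Fin 2 → ℝ}
    (h : IsGainEquilibrium A B n (binDist u) (binDist (ℓ * u)) σ) (h1 : σ 1 < 1) :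
    welfare A B n (binDist u) (binDist (ℓ * u)) σ ≤ 0 := by
  have hg1 : gain A B n (binDist u) (binDist (ℓ * u)) σ 1 ≤ 0 := by
    by_contra! hg; exact h1.ne ((h.2 1).1 hg)
  have hg0 : gain A B n (binDist u) (binDist (ℓ * u)) σ 0 < 0 := by
    by_contra! hg; exact hg1.not_gt (gain_one_pos_of_gain_zero_nonneg hA hn hu hℓ h.1 hg)
  rw [welfare_eq_sum_mul_gain, Fin.sum_univ_two]
  nlinarith [(h.1 0).1, (h.1 1).1]

lemma isGainEquilibrium_zero_one (hu : 0 ≤ u) (hm : lowGainOfRej A B n ℓ u ≤ 0)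
    (hφ : 0 ≤ welfareOfRej A B n ℓ u) :
    IsGainEquilibrium A B n (binDist u) (binDist (ℓ * u)) ![0, 1] := by
  have hg0 := gain_zero_accept_high (A := A) (B := B) (n := n) (u := u) (ℓ := ℓ) 0
  rw [sub_zero, mul_one] at hg0
  refine ⟨isStrategy_vec ⟨le_rfl, zero_le_one⟩ ⟨zero_le_one, le_rfl⟩,
    Fin.forall_fin_two.2 ⟨⟨fun h => ?_, fun _ => rfl⟩, ?_⟩⟩
  · rw [hg0] at h; nlinarith
  · rw [gain_one_zero_one]
    exact ⟨fun _ => rfl, fun h => absurd hφ h.not_ge⟩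

lemma isGainEquilibrium_accept_high (hA : 0 < A) (hn : n ≠ 0) (hu : u ∈ Set.Ioc (0:ℝ) 1)
    (hℓ : ℓ ∈ Set.Ico (0:ℝ) 1) {a : ℝ} (ha : a ∈ Set.Icc (0:ℝ) 1)
    (h0 : 0 ≤ lowGainOfRej A B n ℓ (u * (1 - a)))
    (h1 : 0 < lowGainOfRej A B n ℓ (u * (1 - a)) → a = 1) :
    IsGainEquilibrium A B n (binDist u) (binDist (ℓ * u)) ![a, 1] := by
  have hσ := isStrategy_vec ha ⟨zero_le_one, le_rfl⟩
  have hg0 : 0 ≤ gain A B n (binDist u) (binDist (ℓ * u)) ![a, 1] 0 := by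
    rw [gain_zero_accept_high]; exact mul_nonneg hu.1.le h0
  have hg1 := gain_one_pos_of_gain_zero_nonneg hA hn hu hℓ hσ hg0
  refine ⟨hσ, Fin.forall_fin_two.2 ⟨⟨fun h => ?_, fun h => absurd hg0 h.not_ge⟩,
    ⟨fun _ => rfl, fun h => absurd hg1 h.not_gt⟩⟩⟩
  rw [gain_zero_accept_high] at h
  exact h1 (pos_of_mul_pos_right h hu.1.le)

lemma isGainEquilibrium_one_one (hA : 0 < A) (hn : n ≠ 0) (hu : u ∈ Set.Ioc (0:ℝ) 1)
    (hℓ : ℓ ∈ Set.Ico (0:ℝ) 1) (hAB : B ≤ A * ℓ) :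
    IsGainEquilibrium A B n (binDist u) (binDist (ℓ * u)) ![1, 1] :=
  isGainEquilibrium_accept_high hA hn hu hℓ ⟨zero_le_one, le_rfl⟩
    (by simpa [lowGainOfRej, hn] using hAB) fun _ => rfl

lemma isGainEquilibrium_reject_low (hA : 0 < A) (hn : n ≠ 0) (hu : u ∈ Set.Ioc (0:ℝ) 1)
    (hℓ : ℓ ∈ Set.Ico (0:ℝ) 1) {y : ℝ} (hy : y ∈ Set.Icc (0:ℝ) 1)
    (h : gain A B n (binDist u) (binDist (ℓ * u)) ![0, y] 1 ≤ 0)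
    (h' : gain A B n (binDist u) (binDist (ℓ * u)) ![0, y] 1 < 0 → y = 0) :
    IsGainEquilibrium A B n (binDist u) (binDist (ℓ * u)) ![0, y] := by
  have hσ := isStrategy_vec ⟨le_rfl, zero_le_one⟩ hy
  have hg0 : gain A B n (binDist u) (binDist (ℓ * u)) ![0, y] 0 < 0 := by
    by_contra! hg; exact h.not_gt (gain_one_pos_of_gain_zero_nonneg hA hn hu hℓ hσ hg)
  exact ⟨hσ, Fin.forall_fin_two.2 ⟨⟨fun h => absurd hg0 h.not_gt, fun _ => rfl⟩,
    ⟨fun h'' => absurd h h''.not_ge, h'⟩⟩⟩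

lemma exists_isGainEquilibrium_reject_low_le (hA : 0 < A) (hn : n ≠ 0)
    (hu : u ∈ Set.Ioc (0:ℝ) 1) (hℓ : ℓ ∈ Set.Ico (0:ℝ) 1) {x : ℝ} (hx : x ∈ Set.Icc (0:ℝ) 1)
    (h : gain A B n (binDist u) (binDist (ℓ * u)) ![0, x] 1 ≤ 0) :
    ∃ y ∈ Set.Icc 0 x, IsGainEquilibrium A B n (binDist u) (binDist (ℓ * u)) ![0, y] := by
  by_cases h0 : gain A B n (binDist u) (binDist (ℓ * u)) ![0, 0] 1 ≤ 0
  · exact ⟨0, ⟨le_rfl, hx.1⟩,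
      isGainEquilibrium_reject_low hA hn hu hℓ ⟨le_rfl, zero_le_one⟩ h0 fun _ => rfl⟩
  · obtain ⟨y, hy, hgy⟩ := intermediate_value_Icc' hx.1
      continuous_gain_one_reject_low.continuousOn ⟨h, (not_le.1 h0).le⟩
    exact ⟨y, hy, isGainEquilibrium_reject_low hA hn hu hℓ ⟨hy.1, hy.2.trans hx.2⟩ hgy.le
      fun h => absurd hgy h.ne⟩

lemma gain_one_zero_zero_nonpos_of_le (hA : 0 < A) (hn : n ≠ 0) (hℓ : ℓ ∈ Set.Ico (0:ℝ) 1)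
    (huu' : u ≤ u') (hu' : u' < 1)
    (h : gain A B n (binDist u') (binDist (ℓ * u')) ![0, 0] 1 ≤ 0) :
    gain A B n (binDist u) (binDist (ℓ * u)) ![0, 0] 1 ≤ 0 := by
  have hn' : (0 : ℝ) < n := by positivity
  rw [gain_one_zero_zero] at h ⊢
  have h' : A * (1 - ℓ * u') - B * (1 - u') ≤ 0 := nonpos_of_mul_nonpos_right h hn'
  have hgood : (1 - ℓ * u) * (1 - u') ≤ (1 - ℓ * u') * (1 - u) := by
    nlinarith [mul_nonneg (sub_nonneg.2 huu') (sub_nonneg.2 hℓ.2.le)]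
  refine mul_nonpos_of_nonneg_of_nonpos hn'.le
    (nonpos_of_mul_nonpos_right (a := 1 - u') ?_ (by linarith))
  nlinarith [mul_le_mul_of_nonneg_left hgood hA.le, mul_nonpos_of_nonneg_of_nonpos
    (show 0 ≤ 1 - u by linarith) h']

/-- Type `L` is rejected equally often under both strategies, type `H` less often under `u'`. -/
lemma welfare_reject_low_le_of_le (hA : 0 ≤ A) (hℓ : ℓ ∈ Set.Ico (0:ℝ) 1) (hu : 0 ≤ u)
    (huu' : u ≤ u') (hu' : u' < 1) {x y : ℝ} (hx : x ∈ Set.Icc (0:ℝ) 1)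
    (hxy : (1 - u) * y = (1 - u') * x) :
    welfare A B n (binDist u) (binDist (ℓ * u)) ![0, y] ≤
      welfare A B n (binDist u') (binDist (ℓ * u')) ![0, x] := by
  simp only [welfare, rej_binDist, Matrix.cons_val_zero, Matrix.cons_val_one, mul_zero, zero_add,
    hxy]
  have hH : (1 - ℓ * u) * y ≤ (1 - ℓ * u') * x := by
    refine le_of_mul_le_mul_left (a := 1 - u) ?_ (by linarith)
    have : (1 - u) * ((1 - ℓ * u) * y) = (1 - ℓ * u) * ((1 - u') * x) := by
      rw [← hxy]; ring
    nlinarith [mul_nonneg (mul_nonneg hx.1 (sub_nonneg.2 hℓ.2.le)) (sub_nonneg.2 huu')]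
  have hH0 : 0 ≤ 1 - (1 - ℓ * u') * x := by
    nlinarith [hx.2, hx.1, mul_nonneg hℓ.1 (hu.trans huu')]
  nlinarith [pow_le_pow_left₀ hH0 (by linarith : 1 - (1 - ℓ * u') * x ≤ 1 - (1 - ℓ * u) * y) n]

lemma exists_gain_one_nonpos_of_le (hA : 0 < A) (hn : n ≠ 0) (hu : 0 ≤ u)
    (hℓ : ℓ ∈ Set.Ico (0:ℝ) 1) (huu' : u ≤ u') (hu' : u' ≤ 1) {x' : ℝ}
    (hx' : x' ∈ Set.Ico (0:ℝ) 1) (h : gain A B n (binDist u') (binDist (ℓ * u')) ![0, x'] 1 ≤ 0) :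
    ∃ x ∈ Set.Icc 0 x', gain A B n (binDist u) (binDist (ℓ * u)) ![0, x] 1 ≤ 0 := by
  have hu'1 : u' < 1 := by
    refine hu'.lt_of_ne fun h1 => h.not_gt ?_
    subst h1
    have hG := geom_sum_pos (n := n) (rej_binDist_nonneg (w := ℓ * 1)
      ⟨by simpa using hℓ.1, by simpa using hℓ.2.le⟩
      (isStrategy_vec ⟨le_rfl, zero_le_one⟩ ⟨hx'.1, hx'.2.le⟩)) hn
    have : 0 < A * (1 - ℓ) := mul_pos hA (by linarith [hℓ.2])
    simp only [gain, binDist_one, sub_self, mul_one, zero_mul, mul_zero, sub_zero] at hG ⊢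
    positivity
  rcases hx'.1.eq_or_lt with rfl | hx0
  · exact ⟨0, ⟨le_rfl, le_rfl⟩, gain_one_zero_zero_nonpos_of_le hA hn hℓ huu' hu'1 h⟩
  have hu1 : 0 < 1 - u := by linarith
  have hxy : (1 - u) * (x' * (1 - u') / (1 - u)) = (1 - u') * x' := by field_simp
  have hx : 0 < x' * (1 - u') / (1 - u) := div_pos (mul_pos hx0 (by linarith)) hu1
  refine ⟨_, ⟨hx.le, (div_le_iff₀ hu1).2 (by nlinarith)⟩, nonpos_of_mul_nonpos_right ?_ hx⟩
  have := welfare_reject_low_le_of_le (B := B) (n := n) hA.le hℓ hu huu' hu'1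
    ⟨hx'.1, hx'.2.le⟩ hxy
  rw [welfare_reject_low, welfare_reject_low] at this
  nlinarith

lemma apply_one_eq_one_of_forall_not_isGainEquilibrium (hA : 0 < A) (hn : n ≠ 0)
    (hu : u ∈ Set.Ioc (0:ℝ) 1) (hℓ : ℓ ∈ Set.Ico (0:ℝ) 1) (huu' : u ≤ u') (hu' : u' ≤ 1)
    (hno : ∀ y < 1, ¬ IsGainEquilibrium A B n (binDist u) (binDist (ℓ * u)) ![0, y])
    {σ : Fin 2 → ℝ} (h : IsGainEquilibrium A B n (binDist u') (binDist (ℓ * u')) σ) :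
    σ 1 = 1 := by
  by_contra hne
  have h1 : σ 1 < 1 := lt_of_le_of_ne (h.1 1).2 hne
  have h0 : σ 0 = 0 := by
    by_contra h0
    exact hne (apply_one_eq_one_of_apply_zero_pos hA hn ⟨hu.1.trans_le huu', hu'⟩ hℓ h
      (lt_of_le_of_ne (h.1 0).1 (Ne.symm h0)))
  have hg : gain A B n (binDist u') (binDist (ℓ * u')) ![0, σ 1] 1 ≤ 0 := by
    rw [← eq_vec_of_apply_zero_eq_zero h0]
    by_contra! hg; exact hne ((h.2 1).1 hg)
  obtain ⟨x, hx, hgx⟩ :=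
    exists_gain_one_nonpos_of_le hA hn hu.1.le hℓ huu' hu' ⟨(h.1 1).1, h1⟩ hg
  obtain ⟨y, hy, hyeq⟩ :=
    exists_isGainEquilibrium_reject_low_le hA hn hu hℓ ⟨hx.1, hx.2.trans h1.le⟩ hgx
  exact hno y (hy.2.trans_lt (hx.2.trans_lt h1)) hyeq

lemma lowGainOfRej_nonpos_of_lt_one (hu : 0 < u) {a : ℝ}
    (h : IsGainEquilibrium A B n (binDist u) (binDist (ℓ * u)) ![a, 1]) (ha : a < 1) :
    lowGainOfRej A B n ℓ (u * (1 - a)) ≤ 0 := by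
  by_contra! hm
  have := (h.2 0).1 (by rw [gain_zero_accept_high]; positivity)
  simp only [Matrix.cons_val_zero] at this
  exact ha.ne this

lemma exists_isGainEquilibrium_accept_high_ge (hA : 0 < A) (hn : n ≠ 0)
    (hu : u ∈ Set.Ioc (0:ℝ) 1) (hℓ : ℓ ∈ Set.Ico (0:ℝ) 1) {v : ℝ} (hv : v ∈ Set.Icc 0 u)
    (hm : lowGainOfRej A B n ℓ v ≤ 0) (hφ : 0 ≤ welfareOfRej A B n ℓ v) :
    ∃ a ∈ Set.Icc (0:ℝ) 1, v ≤ u * (1 - a) ∧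
      IsGainEquilibrium A B n (binDist u) (binDist (ℓ * u)) ![a, 1] := by
  by_cases hmu : lowGainOfRej A B n ℓ u ≤ 0
  · have hAB := pow_le_of_lowGainOfRej_nonpos hA hn ⟨hℓ.1, hℓ.2.le⟩ hv.1 hm
    exact ⟨0, ⟨le_rfl, zero_le_one⟩, by simpa using hv.2, isGainEquilibrium_zero_one hu.1.le hmu
      (hφ.trans (welfareOfRej_mono hAB hv.1 hv.2))⟩
  obtain ⟨w, hw, hmw⟩ :=
    intermediate_value_Icc hv.2 continuous_lowGainOfRej.continuousOn ⟨hm, (not_le.1 hmu).le⟩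
  have hwu : u * (1 - (1 - w / u)) = w := by field_simp [hu.1.ne']; ring
  have ha : 1 - w / u ∈ Set.Icc (0:ℝ) 1 :=
    ⟨by linarith [(div_le_one hu.1).2 hw.2], by linarith [div_nonneg (hv.1.trans hw.1) hu.1.le]⟩
  refine ⟨1 - w / u, ha, hwu.symm ▸ hw.1,
    isGainEquilibrium_accept_high hA hn hu hℓ ha ?_ ?_⟩ <;> rw [hwu, hmw]
  exact fun h => absurd h (lt_irrefl 0)

lemma welfareOfRej_le_of_accept_high (hA : 0 < A) (hn : n ≠ 0) (hu : u ∈ Set.Ioc (0:ℝ) 1)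
    (hℓ : ℓ ∈ Set.Ico (0:ℝ) 1) (huu' : u ≤ u') (hu' : u' ≤ 1) {a a' : ℝ}
    (h : IsGainEquilibrium A B n (binDist u) (binDist (ℓ * u)) ![a, 1])
    (h' : IsGainEquilibrium A B n (binDist u') (binDist (ℓ * u')) ![a', 1])
    (hmin' : ∀ τ, IsGainEquilibrium A B n (binDist u') (binDist (ℓ * u')) τ → a' ≤ τ 0) :
    welfareOfRej A B n ℓ (u * (1 - a)) ≤ welfareOfRej A B n ℓ (u' * (1 - a')) := by
  have hu'0 : 0 < u' := hu.1.trans_le huu'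
  have ha : a ∈ Set.Icc (0:ℝ) 1 := by simpa using h.1 0
  have ha' : a' ∈ Set.Icc (0:ℝ) 1 := by simpa using h'.1 0
  have hv : 0 ≤ u * (1 - a) := mul_nonneg hu.1.le (by linarith [ha.2])
  have hvv : u * (1 - a) ≤ u' * (1 - a') := by
    rcases ha.2.eq_or_lt with rfl | ha1
    · simpa using mul_nonneg hu'0.le (sub_nonneg.2 ha'.2)
    have hφ : 0 ≤ welfareOfRej A B n ℓ (u * (1 - a)) :=
      welfare_accept_high (n := n) a ▸ welfare_nonneg h
    obtain ⟨b, -, hb, hbeq⟩ := exists_isGainEquilibrium_accept_high_ge hA hn ⟨hu'0, hu'⟩ hℓ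
      ⟨hv, by nlinarith [ha.1]⟩ (lowGainOfRej_nonpos_of_lt_one hu.1 h ha1) hφ
    have := hmin' _ hbeq
    simp only [Matrix.cons_val_zero] at this
    nlinarith
  rcases hvv.eq_or_lt with heq | hlt
  · rw [heq]
  have ha'1 : a' < 1 := by
    by_contra! ha'1; nlinarith
  exact welfareOfRej_mono (pow_le_of_lowGainOfRej_nonpos hA hn ⟨hℓ.1, hℓ.2.le⟩ (hv.trans hlt.le)
    (lowGainOfRej_nonpos_of_lt_one hu'0 h' ha'1)) hv hlt.le

lemma welfare_le_of_mostSelective (hA : 0 < A) (hn : n ≠ 0) (hu : u ∈ Set.Ioc (0:ℝ) 1)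
    (hℓ : ℓ ∈ Set.Ico (0:ℝ) 1) (huu' : u ≤ u') (hu' : u' ≤ 1) {σ σ' : Fin 2 → ℝ}
    (h : IsGainEquilibrium A B n (binDist u) (binDist (ℓ * u)) σ)
    (hmin : ∀ τ, IsGainEquilibrium A B n (binDist u) (binDist (ℓ * u)) τ → ∀ s, σ s ≤ τ s)
    (h' : IsGainEquilibrium A B n (binDist u') (binDist (ℓ * u')) σ')
    (hmin' : ∀ τ, IsGainEquilibrium A B n (binDist u') (binDist (ℓ * u')) τ → ∀ s, σ' s ≤ τ s) :
    welfare A B n (binDist u) (binDist (ℓ * u)) σ ≤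
      welfare A B n (binDist u') (binDist (ℓ * u')) σ' := by
  rcases (h.1 1).2.lt_or_eq with h1 | h1
  · exact (welfare_nonpos_of_apply_one_lt_one hA hn hu hℓ h h1).trans (welfare_nonneg h')
  have h1' : σ' 1 = 1 := apply_one_eq_one_of_forall_not_isGainEquilibrium hA hn hu hℓ huu' hu'
    (fun y hy hyeq => (hmin _ hyeq 1).not_gt (by simpa [h1] using hy)) h'
  rw [eq_vec_of_apply_one_eq_one h1] at h ⊢
  rw [eq_vec_of_apply_one_eq_one h1'] at h' ⊢
  rw [welfare_accept_high, welfare_accept_high]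
  exact welfareOfRej_le_of_accept_high hA hn hu hℓ huu' hu' h h' fun τ hτ => hmin' τ hτ 0

lemma apply_zero_eq_zero_of_mul_lt (hA : 0 < A) (hn : n ≠ 0) (hu : u ∈ Set.Ioc (0:ℝ) 1)
    (hℓ : ℓ ∈ Set.Ico (0:ℝ) 1) (hAB : A * ℓ < B) {σ : Fin 2 → ℝ}
    (h : IsGainEquilibrium A B n (binDist u) (binDist (ℓ * u)) σ) : σ 0 = 0 := by
  by_contra h0
  have h1 := apply_one_eq_one_of_apply_zero_pos hA hn hu hℓ h
    (lt_of_le_of_ne (h.1 0).1 (Ne.symm h0))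
  refine h0 ((h.2 0).2 ?_)
  rw [eq_vec_of_apply_one_eq_one h1, gain_zero_accept_high]
  exact mul_neg_of_pos_of_neg hu.1 (lowGainOfRej_neg hA hn ⟨hℓ.1, hℓ.2.le⟩ hAB
    (mul_nonneg hu.1.le (sub_nonneg.2 (h.1 0).2)))

lemma welfare_le_of_leastSelective (hA : 0 < A) (hn : n ≠ 0) (hu : u ∈ Set.Ioc (0:ℝ) 1)
    (hℓ : ℓ ∈ Set.Ico (0:ℝ) 1) (huu' : u ≤ u') (hu' : u' ≤ 1) {σ σ' : Fin 2 → ℝ}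
    (h : IsGainEquilibrium A B n (binDist u) (binDist (ℓ * u)) σ)
    (hmax : ∀ τ, IsGainEquilibrium A B n (binDist u) (binDist (ℓ * u)) τ → ∀ s, τ s ≤ σ s)
    (h' : IsGainEquilibrium A B n (binDist u') (binDist (ℓ * u')) σ')
    (hmax' : ∀ τ, IsGainEquilibrium A B n (binDist u') (binDist (ℓ * u')) τ → ∀ s, τ s ≤ σ' s) :
    welfare A B n (binDist u) (binDist (ℓ * u)) σ ≤
      welfare A B n (binDist u') (binDist (ℓ * u')) σ' := by
  have hu'' : u' ∈ Set.Ioc (0:ℝ) 1 := ⟨hu.1.trans_le huu', hu'⟩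
  rcases le_or_gt B (A * ℓ) with hAB | hAB
  · have top : ∀ {w : ℝ} {τ : Fin 2 → ℝ}, w ∈ Set.Ioc (0:ℝ) 1 →
        (∀ ρ, IsGainEquilibrium A B n (binDist w) (binDist (ℓ * w)) ρ → ∀ s, ρ s ≤ τ s) →
        IsGainEquilibrium A B n (binDist w) (binDist (ℓ * w)) τ →
        welfare A B n (binDist w) (binDist (ℓ * w)) τ = welfareOfRej A B n ℓ 0 := by
      intro w τ hw hτmax hτ
      have h11 := hτmax _ (isGainEquilibrium_one_one hA hn hw hℓ hAB)
      have h0 : τ 0 = 1 := le_antisymm (hτ.1 0).2 (by simpa using h11 0)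
      have h1 : τ 1 = 1 := le_antisymm (hτ.1 1).2 (by simpa using h11 1)
      rw [eq_vec_of_apply_one_eq_one h1, h0, welfare_accept_high, sub_self, mul_zero]
    rw [top hu hmax h, top hu'' hmax' h']
  rcases (h.1 1).2.lt_or_eq with h1 | h1
  · exact (welfare_nonpos_of_apply_one_lt_one hA hn hu hℓ h h1).trans (welfare_nonneg h')
  have hw : ∀ w, welfare A B n (binDist w) (binDist (ℓ * w)) ![0, 1] = welfareOfRej A B n ℓ w :=
    fun w => by rw [welfare_accept_high, sub_zero, mul_one]
  have hσ : σ = ![0, 1] := by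
    rw [eq_vec_of_apply_one_eq_one h1, apply_zero_eq_zero_of_mul_lt hA hn hu hℓ hAB h]
  have hφ : 0 ≤ welfareOfRej A B n ℓ u := by simpa only [hσ, hw] using welfare_nonneg h
  have hAB' : A * ℓ ^ n ≤ B := by
    nlinarith [pow_le_of_le_one hℓ.1 hℓ.2.le hn]
  have heq' := isGainEquilibrium_zero_one hu''.1.le
    (lowGainOfRej_neg hA hn ⟨hℓ.1, hℓ.2.le⟩ hAB hu''.1.le).le
    (hφ.trans (welfareOfRej_mono hAB' hu.1.le huu'))
  have hσ' : σ' = ![0, 1] := by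
    rw [eq_vec_of_apply_zero_eq_zero (apply_zero_eq_zero_of_mul_lt hA hn hu'' hℓ hAB h'),
      le_antisymm (h'.1 1).2 (by simpa using hmax' _ heq' 1)]
  rw [hσ, hσ', hw, hw]
  exact welfareOfRej_mono hAB' hu.1.le huu'

lemma welfare_le_of_uninformative (hn : n ≠ 0) (hu : u ∈ Set.Icc (0:ℝ) 1)
    (hu' : u' ∈ Set.Icc (0:ℝ) 1) {σ σ' : Fin 2 → ℝ}
    (h : IsGainEquilibrium A B n (binDist u) (binDist (1 * u)) σ)
    (h' : IsGainEquilibrium A B n (binDist u') (binDist (1 * u')) σ') :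
    welfare A B n (binDist u) (binDist (1 * u)) σ ≤
      welfare A B n (binDist u') (binDist (1 * u')) σ' := by
  simp only [one_mul] at h h' ⊢
  rw [welfare_eq_max_of_uninformative (binDist_nonneg hu) (sum_binDist u) hn h,
    welfare_eq_max_of_uninformative (binDist_nonneg hu') (sum_binDist u') hn h']

end Binary

/-- stronger good news raises surplus. For binary experiments (outcome `0`
is the low signal `l`, outcome `1` the high signal `h`) with the same bad-news
likelihood ratio and weakly stronger good news under `E' = (qL, qH)`, total surplus in
the most (resp. least) selective equilibrium under `E'` weakly exceeds that under
`E = (pL, pH)`. -/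
theorem stronger_good_news_raises_surplus
    (ρ c : ℝ) (hρ : ρ ∈ Set.Ioo (0:ℝ) 1) (hc : c ∈ Set.Ioo (0:ℝ) 1)
    (n : ℕ) (hn : 1 ≤ n)
    (pL pH qL qH : Fin 2 → ℝ)
    (hE : IsExperiment pL pH) (hE' : IsExperiment qL qH)
    (hbad_eq : qH 0 * pL 0 = pH 0 * qL 0)
    (hgood : pH 1 * qL 1 ≤ qH 1 * pL 1) :
    (∀ σhat σhat' : Fin 2 → ℝ, MostSelective ρ c n pL pH σhat →
      MostSelective ρ c n qL qH σhat' →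
      surplus ρ c n pL pH σhat ≤ surplus ρ c n qL qH σhat') ∧
    (∀ σcheck σcheck' : Fin 2 → ℝ, LeastSelective ρ c n pL pH σcheck →
      LeastSelective ρ c n qL qH σcheck' →
      surplus ρ c n pL pH σcheck ≤ surplus ρ c n qL qH σcheck') := by
  have hn0 : n ≠ 0 := by omega
  have hA : 0 < (1 - c) * ρ := mul_pos (sub_pos.2 hc.2) hρ.1
  simp only [MostSelective, LeastSelective, isEquilibrium_iff hρ hn0 hE,
    isEquilibrium_iff hρ hn0 hE']
  obtain ⟨u, ℓ, hu, hℓ, rfl, rfl⟩ := exists_binDist_of_isExperiment hE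
  obtain ⟨u', ℓ', hu', -, rfl, rfl⟩ := exists_binDist_of_isExperiment hE'
  obtain rfl : ℓ' = ℓ := by
    simp only [binDist_zero] at hbad_eq
    exact mul_right_cancel₀ (mul_pos hu'.1 hu.1).ne' (by linear_combination hbad_eq)
  rcases hℓ.2.eq_or_lt with rfl | hℓ1
  · have hu₀ := Set.Ioc_subset_Icc_self hu
    have hu₀' := Set.Ioc_subset_Icc_self hu'
    exact ⟨fun σ σ' h h' => welfare_le_of_uninformative hn0 hu₀ hu₀' h.1 h'.1,
      fun σ σ' h h' => welfare_le_of_uninformative hn0 hu₀ hu₀' h.1 h'.1⟩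
  have huu' : u ≤ u' := by
    simp only [binDist_one] at hgood
    nlinarith
  exact ⟨fun σ σ' h h' => welfare_le_of_mostSelective hA hn0 hu ⟨hℓ.1, hℓ1⟩ huu' hu'.2
      h.1 h.2 h'.1 h'.2,
    fun σ σ' h h' => welfare_le_of_leastSelective hA hn0 hu ⟨hℓ.1, hℓ1⟩ huu' hu'.2
      h.1 h.2 h'.1 h'.2⟩
end
end
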